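/- arXiv:1404.4626 — 4 statements merged into one kernel-verified Lean document; each statement's English description precedes it below -/
import Mathlib

section
/- Let G be a countable group, μ a probability measure on G, X a G-space with a μ-stationary probability measure ν, D a countable G-set, and Θ : X → D a measurable G-equivariant map. If E ⊆ X is a G-invariant measurable subset with ν(E) > 0, then Θ(E) contains a finite orbit of the subgroup of G generated by the support of μ. -/
/-! Restricting `ν` to `E` and pushing it forward along `Θ` gives a finite, nonzero `μ`-stationary
measure `ρ` on the countable set `D`. The masses of its atoms are summable, so the maximal atom
mass is attained, and by only finitely many atoms. Stationarity writes the mass of an atom as the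
`μ`-average of the masses of its translates by `g⁻¹`, so these translates of a maximal atom are
maximal whenever `μ g ≠ 0`. The finite set of maximal atoms is therefore invariant under the
subgroup generated by the support of `μ`, and each of its points has a finite orbit made of atoms
of `ρ`, which lie in `Θ '' E`. -/

open scoped Pointwise
open MeasureTheory

namespace ENNReal

lemma exists_forall_le_of_tsum_ne_top {ι : Type*} {f : ι → ℝ≥0∞} (hf : ∑' i, f i ≠ ∞) {j : ι}
    (hj : f j ≠ 0) : ∃ i, ∀ k, f k ≤ f i := by
  obtain ⟨i, hji, hi⟩ := Set.exists_max_image {k | f j ≤ f k} f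
    (finite_const_le_of_tsum_ne_top hf hj) ⟨j, le_refl (f j)⟩
  refine ⟨i, fun k => ?_⟩
  by_cases hk : f j ≤ f k
  · exact hi k hk
  · exact (not_le.mp hk).le.trans hji

lemma eq_of_tsum_mul_eq_of_le {ι : Type*} {w f : ι → ℝ≥0∞} {M : ℝ≥0∞} (hw : ∑' i, w i = 1)
    (hfM : ∀ i, f i ≤ M) (hM : M ≠ ∞) (havg : ∑' i, w i * f i = M) {i : ι} (hi : w i ≠ 0) :
    f i = M := by
  by_contra hne
  have hwi : w i ≠ ∞ := ((ENNReal.le_tsum i).trans_eq hw).trans_lt one_lt_top |>.ne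
  have : ∑' k, w k * f k < ∑' k, w k * M :=
    tsum_lt_tsum (i := i) (havg ▸ hM) (fun k => mul_le_mul_right (hfM k) _)
      (ENNReal.mul_lt_mul_right hi hwi (lt_of_le_of_ne (hfM i) hne))
  rw [havg, ENNReal.tsum_mul_right, hw, one_mul] at this
  exact lt_irrefl _ this

end ENNReal

lemma MulAction.closure_le_stabilizer_of_finite {G α : Type*} [Group G] [MulAction G α]
    {s : Set α} (hs : s.Finite) {T : Set G} (hT : ∀ g ∈ T, g⁻¹ • s ⊆ s) :
    Subgroup.closure T ≤ stabilizer G s :=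
  (Subgroup.closure_le _).mpr fun g hg =>
    inv_inv g ▸ inv_mem ((mem_stabilizer_set_iff_smul_set_subset hs).mpr (hT g hg))

namespace MeasureTheory.Measure

variable {G X : Type*} [Group G] [MulAction G X] [MeasurableSpace X]

def IsStationary (μ : G → ENNReal) (ν : Measure X) : Prop :=
  ∀ E : Set X, MeasurableSet E → ν E = ∑' g : G, μ g * ν (g⁻¹ • E)

lemma IsStationary.restrict {μ : G → ENNReal} {ν : Measure X} (hν : IsStationary μ ν)
    {E : Set X} (hE : MeasurableSet E) (hEinv : ∀ g : G, g • E = E) :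
    IsStationary μ (ν.restrict E) := by
  intro F hF
  simp only [restrict_apply' hE]
  rw [hν _ (hF.inter hE)]
  congr! 3 with g
  rw [Set.smul_set_inter, hEinv]

lemma IsStationary.map {D : Type*} [MulAction G D] [MeasurableSpace D] [MeasurableConstSMul G D]
    {μ : G → ENNReal} {ν : Measure X} (hν : IsStationary μ ν) {Θ : X → D} (hΘ : Measurable Θ)
    (hΘequiv : ∀ (g : G) (x : X), Θ (g • x) = g • Θ x) :
    IsStationary μ (ν.map Θ) := by
  have preimage_smul : ∀ (g : G) (F : Set D), Θ ⁻¹' (g • F) = g • Θ ⁻¹' F := by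
    intro g F
    ext x
    simp [Set.mem_smul_set_iff_inv_smul_mem, hΘequiv]
  intro F hF
  rw [map_apply hΘ hF, hν _ (hΘ hF)]
  congr! 2 with g
  rw [map_apply hΘ (hF.const_smul _), preimage_smul]

section Atoms

variable {D : Type*} [MeasurableSpace D]

def maxAtoms (ρ : Measure D) : Set D := {d | ∀ e, ρ {e} ≤ ρ {d}}

variable [MeasurableSingletonClass D] [Countable D] {ρ : Measure D}

lemma tsum_measure_singleton_eq_measure_univ (ρ : Measure D) : ∑' d, ρ {d} = ρ Set.univ := by
  simpa using tsum_indicator_apply_singleton ρ Set.univ MeasurableSet.univ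

lemma exists_measure_singleton_ne_zero (hρ : ρ ≠ 0) : ∃ e, ρ {e} ≠ 0 := by
  by_contra! h
  exact hρ (measure_univ_eq_zero.mp (by simp [← tsum_measure_singleton_eq_measure_univ, h]))

lemma measure_singleton_ne_zero_of_mem_maxAtoms (hρ : ρ ≠ 0) {d : D} (hd : d ∈ maxAtoms ρ) :
    ρ {d} ≠ 0 := by
  obtain ⟨e, he⟩ := exists_measure_singleton_ne_zero hρ
  exact (pos_iff_ne_zero.mpr he |>.trans_le (hd e)).ne'

variable [IsFiniteMeasure ρ]

lemma maxAtoms_nonempty (hρ : ρ ≠ 0) : (maxAtoms ρ).Nonempty := by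
  obtain ⟨e, he⟩ := exists_measure_singleton_ne_zero hρ
  exact ENNReal.exists_forall_le_of_tsum_ne_top
    (tsum_measure_singleton_eq_measure_univ ρ ▸ measure_ne_top ρ _) he

lemma maxAtoms_finite (hρ : ρ ≠ 0) : (maxAtoms ρ).Finite := by
  obtain ⟨d, hd⟩ := maxAtoms_nonempty hρ
  exact (ENNReal.finite_const_le_of_tsum_ne_top
    (tsum_measure_singleton_eq_measure_univ ρ ▸ measure_ne_top ρ _)
    (measure_singleton_ne_zero_of_mem_maxAtoms hρ hd)).subset fun e he => he d

lemma IsStationary.closure_le_stabilizer_maxAtoms {G : Type*} [Group G] [MulAction G D]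
    {μ : G → ENNReal} (hμ : ∑' g, μ g = 1) (hρ : IsStationary μ ρ) (hρ0 : ρ ≠ 0) :
    Subgroup.closure {g | μ g ≠ 0} ≤ MulAction.stabilizer G (maxAtoms ρ) := by
  refine MulAction.closure_le_stabilizer_of_finite (maxAtoms_finite hρ0) ?_
  rintro g hg _ ⟨d, hd, rfl⟩
  have hmass : ρ {g⁻¹ • d} = ρ {d} :=
    ENNReal.eq_of_tsum_mul_eq_of_le (f := fun g => ρ {g⁻¹ • d}) hμ (fun _ => hd _)
      (measure_ne_top ρ _) (by simpa using (hρ {d} (measurableSet_singleton d)).symm) hg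
  exact fun e => hmass ▸ hd e

end Atoms

end MeasureTheory.Measure

open Measure

theorem stmt0_general {G X D : Type*} [Group G] [Countable D]
    [MulAction G X] [MulAction G D] [MeasurableSpace X]
    [MeasurableSpace D] [MeasurableSingletonClass D]
    (μ : G → ENNReal) (hμ : ∑' g : G, μ g = 1)
    (ν : Measure X) [IsProbabilityMeasure ν]
    (hstat : ∀ E : Set X, MeasurableSet E → ν E = ∑' g : G, μ g * ν (g⁻¹ • E))
    (Θ : X → D) (hΘmeas : Measurable Θ)
    (hΘequiv : ∀ (g : G) (x : X), Θ (g • x) = g • Θ x)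
    (E : Set X) (hE : MeasurableSet E) (hEinv : ∀ g : G, g • E = E) (hpos : 0 < ν E) :
    ∃ x : D, {d : D | ∃ h ∈ Subgroup.closure {g : G | μ g ≠ 0}, h • x = d} ⊆ Θ '' E ∧
      {d : D | ∃ h ∈ Subgroup.closure {g : G | μ g ≠ 0}, h • x = d}.Finite := by
  have : MeasurableConstSMul G D := ⟨fun _ => .of_discrete⟩
  set ρ := (ν.restrict E).map Θ
  have hρ : IsStationary μ ρ :=
    (show IsStationary μ ν from hstat).restrict hE hEinv |>.map hΘmeas hΘequiv
  have hρ0 : ρ ≠ 0 := fun h => hpos.ne' <| by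
    simpa [ρ, map_apply hΘmeas .univ] using congrArg (· Set.univ) h
  have horbit : ∀ x ∈ maxAtoms ρ,
      {d : D | ∃ h ∈ Subgroup.closure {g : G | μ g ≠ 0}, h • x = d} ⊆ maxAtoms ρ := by
    rintro x hx _ ⟨h, hh, rfl⟩
    rw [← MulAction.mem_stabilizer_iff.mp (hρ.closure_le_stabilizer_maxAtoms hμ hρ0 hh)]
    exact Set.smul_mem_smul_set hx
  obtain ⟨x, hx⟩ := maxAtoms_nonempty hρ0
  refine ⟨x, fun d hd => ?_, (maxAtoms_finite hρ0).subset (horbit x hx)⟩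
  have hmass := measure_singleton_ne_zero_of_mem_maxAtoms hρ0 (horbit x hx hd)
  rw [map_apply hΘmeas (measurableSet_singleton d), restrict_apply' hE] at hmass
  obtain ⟨y, hyd, hyE⟩ := nonempty_of_measure_ne_zero hmass
  exact ⟨y, hyE, hyd⟩

/-- Let G be a countable group, μ a probability measure on G, X a G-space with a
μ-stationary probability measure ν, D a countable G-set, and Θ : X → D a measurable
G-equivariant map. If E ⊆ X is a G-invariant measurable subset with ν(E) > 0, then Θ(E)
contains a finite orbit of the subgroup of G generated by the support of μ. -/
theorem stmt0 {G X D : Type*} [Group G] [Countable G] [Countable D]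
    [MulAction G X] [MulAction G D] [MeasurableSpace X]
    [MeasurableSpace D] [MeasurableSingletonClass D]
    (μ : G → ENNReal) (hμ : ∑' g : G, μ g = 1)
    (ν : Measure X) [IsProbabilityMeasure ν]
    (hstat : ∀ E : Set X, MeasurableSet E → ν E = ∑' g : G, μ g * ν (g⁻¹ • E))
    (Θ : X → D) (hΘmeas : Measurable Θ)
    (hΘequiv : ∀ (g : G) (x : X), Θ (g • x) = g • Θ x)
    (E : Set X) (hE : MeasurableSet E) (hEinv : ∀ g : G, g • E = E) (hpos : 0 < ν E) :
    ∃ x : D, {d : D | ∃ h ∈ Subgroup.closure {g : G | μ g ≠ 0}, h • x = d} ⊆ Θ '' E ∧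
      {d : D | ∃ h ∈ Subgroup.closure {g : G | μ g ≠ 0}, h • x = d}.Finite :=
  stmt0_general μ hμ ν hstat Θ hΘmeas hΘequiv E hE hEinv hpos
end

section
/- Let T be an ℝ-tree and g an isometry of T with a fixed point. If there exist two hyperbolic isometries h and h′ of T such that ‖gh‖ ≤ ‖h‖, ‖gh′‖ ≤ ‖h′‖, and ‖hh′‖ > ‖h‖ + ‖h′‖, then g fixes an arc (a nondegenerate segment) of T. Conversely, if g fixes an arc of T and there exist hyperbolic isometries h, h′ whose axes meet the fixed point set of g but are disjoint from each other, then these three translation-length inequalities hold. -/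
/-- A metric space is an ℝ-tree if it is geodesic and 0-hyperbolic (four-point condition);
equivalently, any two points are joined by a unique arc, which is isometric to a segment. -/
def IsRTree (T : Type*) [MetricSpace T] : Prop :=
  (∀ x y : T, ∃ f : ℝ → T, f 0 = x ∧ f (dist x y) = y ∧
      ∀ s ∈ Set.Icc (0 : ℝ) (dist x y), ∀ t ∈ Set.Icc (0 : ℝ) (dist x y),
        dist (f s) (f t) = |s - t|) ∧
  ∀ x y z w : T, dist x y + dist z w ≤ max (dist x z + dist y w) (dist x w + dist y z)

/-- The translation length ‖φ‖ = inf_x d(x, φ x) of an isometry φ. -/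
noncomputable def transLen {T : Type*} [MetricSpace T] (φ : T ≃ᵢ T) : ℝ :=
  ⨅ x : T, dist x (φ x)

/-- The axis (characteristic set) of an isometry: the set of points moved a minimal distance. -/
def axisSet {T : Type*} [MetricSpace T] (φ : T ≃ᵢ T) : Set T :=
  {x : T | dist x (φ x) = transLen φ}

/-- An isometry of an ℝ-tree is hyperbolic if its translation length is positive. -/
def IsHyperbolicIsom {T : Type*} [MetricSpace T] (φ : T ≃ᵢ T) : Prop :=
  0 < transLen φ

/-! In an ℝ-tree every isometry `φ` attains its translation length `‖φ‖` on a nonempty closed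
convex set `axisSet φ`: its axis, or its fixed point set when `‖φ‖ = 0`. If the characteristic
sets of `φ₁` and `φ₂` are disjoint and `[b₁, b₂]` is the bridge between them, then `b₂` lies on the
axis of `φ₁ φ₂` and `‖φ₁ φ₂‖ = ‖φ₁‖ + ‖φ₂‖ + 2 d(b₁, b₂)`; if they meet, the triangle inequality at
a common point gives `‖φ₁ φ₂‖ ≤ ‖φ₁‖ + ‖φ₂‖`. For `φ₁ = g` elliptic this says that `‖g h‖ ≤ ‖h‖`
exactly when `Fix g` meets the axis of `h`. So under the first set of hypotheses `Fix g` meets the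
axes of `h` and `h'`, at two points which differ because `‖h h'‖ > ‖h‖ + ‖h'‖`; the converse is the
same two facts read the other way. -/

section Betweenness

variable {T : Type*} [MetricSpace T]

def Between (x y z : T) : Prop := dist x z = dist x y + dist y z

theorem between_self_left (x y : T) : Between x x y := by simp [Between]

theorem between_self_right (x y : T) : Between x y y := by simp [Between]

namespace Between

variable {w x y z : T}

theorem dist_eq (h : Between x y z) : dist x z = dist x y + dist y z := h

theorem symm (h : Between x y z) : Between z y x := by
  unfold Between at *
  rw [dist_comm z x, dist_comm z y, dist_comm y x]
  linarith

theorem map {U : Type*} [MetricSpace U] {f : T → U} (h : Between x y z) (hf : Isometry f) :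
    Between (f x) (f y) (f z) := by
  simpa only [Between, hf.dist_eq] using h

theorem trans_left (h₁ : Between w y z) (h₂ : Between w x y) : Between w x z := by
  unfold Between at *
  linarith [dist_triangle x y z, dist_triangle w x z]

theorem trans_right (h₁ : Between w x z) (h₂ : Between x y z) : Between w y z := by
  unfold Between at *
  linarith [dist_triangle w x y, dist_triangle w y z]

theorem trans_left_right (h₁ : Between w y z) (h₂ : Between w x y) : Between x y z := by
  unfold Between at *
  linarith [dist_triangle w x z, dist_triangle x y z]

theorem trans_right_left (h₁ : Between w x z) (h₂ : Between x y z) : Between w x y := by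
  unfold Between at *
  linarith [dist_triangle w y z, dist_triangle w x y]

theorem eq_of_swap_left (h₁ : Between x y z) (h₂ : Between y x z) : x = y := by
  unfold Between at *
  exact dist_eq_zero.1 (by linarith [dist_comm x y, dist_nonneg (x := x) (y := y)])

end Between

def IsBetweenConvex (A : Set T) : Prop :=
  ∀ a ∈ A, ∀ b ∈ A, ∀ z, Between a z b → z ∈ A

/-- `b` is the projection of `y` onto `A`: every geodesic from a point of `A` to `y` passes
through `b ∈ A`. -/
def IsGate (A : Set T) (b y : T) : Prop :=
  b ∈ A ∧ ∀ z ∈ A, Between z b y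

theorem IsGate.map {A : Set T} {b y : T} {φ : T ≃ᵢ T} (hA : ∀ z, φ z ∈ A ↔ z ∈ A)
    (h : IsGate A b y) : IsGate A (φ b) (φ y) := by
  refine ⟨(hA b).2 h.1, fun z hz => ?_⟩
  simpa using (h.2 (φ.symm z) ((hA _).1 (by simpa using hz))).map φ.isometry

end Betweenness

namespace IsRTree

variable {T : Type*} [MetricSpace T]

theorem between_or (ht : IsRTree T) {a w b : T} (h : Between a w b) (y : T) :
    Between a w y ∨ Between y w b := by
  rcases le_max_iff.1 (ht.2 a b w y) with h4 | h4
  · right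
    unfold Between at *
    linarith [dist_triangle y w b, dist_comm b y, dist_comm w b, dist_comm w y]
  · left
    unfold Between at *
    linarith [dist_triangle a w y, dist_comm b w]

theorem between_of_dist_le (ht : IsRTree T) {a x x' y : T} (h : Between a x y)
    (h' : Between a x' y) (hle : dist a x ≤ dist a x') : Between a x x' := by
  rcases ht.between_or h x' with hx | hx
  · exact hx
  · unfold Between at *
    linarith [dist_comm x x', dist_nonneg (x := x) (y := x')]

theorem eq_of_between_of_dist_eq (ht : IsRTree T) {a x x' y : T} (h : Between a x y)
    (h' : Between a x' y) (heq : dist a x = dist a x') : x = x' :=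
  dist_eq_zero.1 (by linarith [(ht.between_of_dist_le h h' heq.le).dist_eq])

theorem between_extend (ht : IsRTree T) {a w b a' b' : T} (h : Between a w b) (ha : w ≠ a)
    (hb : w ≠ b) (ha' : Between w a a') (hb' : Between w b b') : Between a' w b' := by
  have key : ∀ {a b b'}, Between a w b → w ≠ b → Between w b b' → Between a w b' :=
    fun h hb hb' => (ht.between_or h _).resolve_right fun h' => hb (hb'.eq_of_swap_left h'.symm)
  exact (key (key h hb hb').symm ha ha').symm

theorem between_trans_of_ne (ht : IsRTree T) {a b c d : T} (h₁ : Between a b c)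
    (h₂ : Between b c d) (hbc : b ≠ c) : Between a b d := by
  by_cases hab : b = a
  · subst hab
    exact between_self_left b d
  · exact ht.between_extend h₁ hab hbc (between_self_right b a) h₂

theorem exists_geodesic (ht : IsRTree T) (x y : T) :
    ∃ f : ℝ → T, ContinuousOn f (Set.Icc 0 (dist x y)) ∧
      ∀ t ∈ Set.Icc 0 (dist x y), Between x (f t) y ∧ dist x (f t) = t := by
  obtain ⟨f, hf0, hfd, hf⟩ := ht.1 x y
  refine ⟨f, (LipschitzOnWith.of_dist_le_mul (K := 1) fun s hs t ht' => ?_).continuousOn,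
    fun t htI => ?_⟩
  · rw [hf s hs t ht', Real.dist_eq, NNReal.coe_one, one_mul]
  · have h0 := hf 0 ⟨le_rfl, dist_nonneg⟩ t htI
    have h1 := hf t htI _ ⟨dist_nonneg, le_rfl⟩
    rw [hf0, abs_of_nonpos (by linarith [htI.1])] at h0
    rw [hfd, abs_of_nonpos (by linarith [htI.2])] at h1
    exact ⟨by unfold Between; linarith, by linarith⟩

theorem exists_between_dist_eq (ht : IsRTree T) {x y : T} {t : ℝ} (h₀ : 0 ≤ t)
    (h₁ : t ≤ dist x y) : ∃ m, Between x m y ∧ dist x m = t := by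
  obtain ⟨f, -, hf⟩ := ht.exists_geodesic x y
  exact ⟨f t, hf t ⟨h₀, h₁⟩⟩

theorem exists_median (ht : IsRTree T) (x y z : T) :
    ∃ m, Between x m y ∧ Between x m z ∧ Between y m z := by
  obtain ⟨m, hxy, hxm⟩ := ht.exists_between_dist_eq (x := x) (y := y)
    (t := (dist x y + dist x z - dist y z) / 2)
    (by linarith [dist_triangle y x z, dist_comm x y]) (by linarith [dist_triangle x y z])
  rcases ht.between_or hxy z with hxz | hzy
  · refine ⟨m, hxy, hxz, ?_⟩
    unfold Between at *
    linarith [dist_comm y m]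
  · refine ⟨m, hxy, ?_, hzy.symm⟩
    unfold Between at *
    linarith [dist_comm y m, dist_comm z y, dist_comm z m]

end IsRTree

section TranslationLength

variable {T : Type*} [MetricSpace T] {φ : T ≃ᵢ T} {x : T}

theorem mem_axisSet_iff : x ∈ axisSet φ ↔ dist x (φ x) = transLen φ := Iff.rfl

theorem transLen_le (φ : T ≃ᵢ T) (x : T) : transLen φ ≤ dist x (φ x) :=
  ciInf_le ⟨0, by rintro _ ⟨y, rfl⟩; exact dist_nonneg⟩ x

theorem le_transLen [Nonempty T] {a : ℝ} (h : ∀ x, a ≤ dist x (φ x)) : a ≤ transLen φ :=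
  le_ciInf h

theorem transLen_eq_zero_of_apply_eq (hx : φ x = x) : transLen φ = 0 := by
  have : Nonempty T := ⟨x⟩
  refine le_antisymm ?_ (le_transLen fun _ => dist_nonneg)
  simpa [hx] using transLen_le φ x

theorem axisSet_eq_of_apply_eq (hx : φ x = x) : axisSet φ = {y | φ y = y} := by
  ext y
  simp [axisSet, transLen_eq_zero_of_apply_eq hx, eq_comm]

theorem apply_mem_axisSet_iff : φ x ∈ axisSet φ ↔ x ∈ axisSet φ := by
  simp only [mem_axisSet_iff, φ.dist_eq]

theorem isClosed_axisSet (φ : T ≃ᵢ T) : IsClosed (axisSet φ) :=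
  isClosed_eq (continuous_id.dist φ.continuous) continuous_const

theorem dist_symm_apply (φ : T ≃ᵢ T) (x : T) : dist x (φ.symm x) = dist x (φ x) := by
  rw [← φ.dist_eq, φ.apply_symm_apply, dist_comm]

theorem dist_apply_le_of_between {c y : T} (h : Between y c (φ c)) :
    dist c (φ c) ≤ dist y (φ y) := by
  have := dist_triangle y (φ y) (φ c)
  rw [φ.dist_eq] at this
  linarith [h.dist_eq, dist_comm y c]

theorem transLen_trans_le {φ₁ φ₂ : T ≃ᵢ T} {p : T} (h₁ : p ∈ axisSet φ₁)
    (h₂ : p ∈ axisSet φ₂) : transLen (φ₂.trans φ₁) ≤ transLen φ₁ + transLen φ₂ :=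
  calc transLen (φ₂.trans φ₁) ≤ dist p (φ₁ (φ₂ p)) := transLen_le _ p
    _ ≤ dist p (φ₁ p) + dist (φ₁ p) (φ₁ (φ₂ p)) := dist_triangle _ _ _
    _ = transLen φ₁ + transLen φ₂ := by rw [φ₁.dist_eq, h₁, h₂]

end TranslationLength

namespace IsRTree

variable {T : Type*} [MetricSpace T] {φ : T ≃ᵢ T}

theorem dist_apply_le_max (ht : IsRTree T) (φ : T ≃ᵢ T) {u z w : T} (h : Between u z w) :
    dist z (φ z) ≤ max (dist u (φ u)) (dist w (φ w)) := by
  rcases ht.between_or h (φ z) with h' | h'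
  · exact (dist_apply_le_of_between h').trans (le_max_left _ _)
  · exact (dist_apply_le_of_between h'.symm).trans (le_max_right _ _)

theorem isBetweenConvex_axisSet (ht : IsRTree T) (φ : T ≃ᵢ T) :
    IsBetweenConvex (axisSet φ) := fun a ha b hb z h =>
  le_antisymm ((ht.dist_apply_le_max φ h).trans_eq (by rw [ha, hb, max_self]))
    (transLen_le φ z)

theorem dist_apply_le_of_between_apply (ht : IsRTree T) {c : T}
    (hc : Between c (φ c) (φ (φ c))) (y : T) : dist c (φ c) ≤ dist y (φ y) := by
  have h : Between (φ.symm c) c (φ c) := by simpa using hc.map φ.symm.isometry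
  rcases ht.between_or h y with h' | h'
  · simpa only [dist_symm_apply] using dist_apply_le_of_between (φ := φ.symm) h'.symm
  · exact dist_apply_le_of_between h'

theorem transLen_eq_of_between_apply (ht : IsRTree T) {c : T}
    (hc : Between c (φ c) (φ (φ c))) : transLen φ = dist c (φ c) :=
  have : Nonempty T := ⟨c⟩
  le_antisymm (transLen_le φ c) (le_transLen (ht.dist_apply_le_of_between_apply hc))

theorem between_apply_apply (ht : IsRTree T) {c m : T} (h₁ : Between c m (φ c))
    (h₂ : Between m (φ c) (φ m)) (hc : c ≠ m) (hm : m ≠ φ c) :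
    Between c (φ c) (φ (φ c)) :=
  ht.between_extend h₂ hm.symm (φ.injective.ne hc) h₁.symm (h₁.map φ.isometry)

/-- The midpoint `c` of `[x, φ x]` works: either `[x, φ x]` and `[φ x, φ² x]` overlap in less
than half their length, and the median `m` of `x, φ x, φ² x` is the midpoint of `[c, φ c]`, or
`c` and `φ c` lie on the common part at the same distance from `φ x`, so `c` is fixed. -/
theorem exists_between_apply_apply (ht : IsRTree T) (φ : T ≃ᵢ T) (x : T) :
    ∃ c, Between c (φ c) (φ (φ c)) := by
  obtain ⟨m, hm₀₁, hm₀₂, hm₁₂⟩ := ht.exists_median x (φ x) (φ (φ x))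
  obtain ⟨c, hc, hxc⟩ := ht.exists_between_dist_eq (x := x) (y := φ x)
    (t := dist x (φ x) / 2) (by positivity) (by linarith [dist_nonneg (x := x) (y := φ x)])
  have hφc : Between (φ x) (φ c) (φ (φ x)) := hc.map φ.isometry
  have hφxφc : dist (φ x) (φ c) = dist x (φ x) / 2 := by rw [φ.dist_eq, hxc]
  have hcφx : dist (φ x) c = dist x (φ x) / 2 := by linarith [hc.dist_eq, dist_comm c (φ x)]
  have hxm := hm₀₁.dist_eq
  rcases lt_or_ge (2 * dist (φ x) m) (dist x (φ x)) with hk | hk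
  · have hxcm : Between x c m := ht.between_of_dist_le hc hm₀₁ (by linarith [dist_comm m (φ x)])
    have hmφc : Between (φ x) m (φ c) := ht.between_of_dist_le hm₁₂ hφc (by linarith)
    have hφcφm : Between (φ x) (φ c) (φ m) := ht.between_of_dist_le hφc
      (hm₀₁.map φ.isometry) (by simp only [φ.dist_eq]; linarith [dist_comm m (φ x)])
    refine ⟨c, ht.between_apply_apply (m := m) ?_ (hφcφm.trans_left_right hmφc) ?_ ?_⟩
    · exact (hm₀₂.trans_left_right hxcm).trans_right_left (hφc.trans_left_right hmφc)
    · intro hcm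
      subst hcm
      linarith [dist_comm c (φ x)]
    · intro hm
      subst hm
      linarith
  · have hfix : φ c = c := ht.eq_of_between_of_dist_eq
      (ht.between_of_dist_le hφc hm₁₂ (by linarith))
      (ht.between_of_dist_le hc.symm hm₀₁.symm (by linarith)) (by rw [hφxφc, hcφx])
    exact ⟨c, by rw [hfix, hfix]; exact between_self_left c c⟩

theorem axisSet_nonempty (ht : IsRTree T) [Nonempty T] (φ : T ≃ᵢ T) :
    (axisSet φ).Nonempty :=
  let ⟨c, hc⟩ := ht.exists_between_apply_apply φ (Classical.arbitrary T)
  ⟨c, (ht.transLen_eq_of_between_apply hc).symm⟩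

theorem isGate_of_forall_eq (ht : IsRTree T) {A : Set T} {b y : T} (hA : IsBetweenConvex A)
    (hb : b ∈ A) (h : ∀ m ∈ A, Between b m y → m = b) : IsGate A b y := by
  refine ⟨hb, fun z hz => ?_⟩
  obtain ⟨m, hbz, hby, hzy⟩ := ht.exists_median b z y
  obtain rfl := h m (hA b hb z hz m hbz) hby
  exact hzy

theorem exists_last_mem (ht : IsRTree T) {A : Set T} (hA : IsClosed A) {q : T} (hq : q ∈ A)
    (p : T) : ∃ b ∈ A, Between q b p ∧ ∀ m ∈ A, Between b m p → m = b := by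
  obtain ⟨f, hf, hfb⟩ := ht.exists_geodesic q p
  set S := Set.Icc 0 (dist q p) ∩ f ⁻¹' A
  have hS : IsClosed S := hf.preimage_isClosed_of_isClosed isClosed_Icc hA
  have hf0 : f 0 = q :=
    (dist_eq_zero.1 (hfb 0 ⟨le_rfl, dist_nonneg⟩).2).symm
  have h0S : (0 : ℝ) ∈ S := ⟨⟨le_rfl, dist_nonneg⟩, by simpa [hf0] using hq⟩
  have hbdd : BddAbove S := ⟨dist q p, fun t ht => ht.1.2⟩
  obtain ⟨htI, htA⟩ : sSup S ∈ S := hS.csSup_mem ⟨0, h0S⟩ hbdd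
  obtain ⟨hqb, hqs⟩ := hfb _ htI
  refine ⟨f (sSup S), htA, hqb, fun m hm hbm => ?_⟩
  have hqm := hqb.trans_right_left hbm
  have hsI : dist q m ∈ Set.Icc 0 (dist q p) :=
    ⟨dist_nonneg, by linarith [(hqb.trans_right hbm).dist_eq, dist_nonneg (x := m) (y := p)]⟩
  have hfm : f (dist q m) = m :=
    ht.eq_of_between_of_dist_eq (hfb _ hsI).1 (hqb.trans_right hbm) (hfb _ hsI).2
  have hle : dist q m ≤ sSup S := le_csSup hbdd ⟨hsI, by rwa [Set.mem_preimage, hfm]⟩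
  have hbm0 : dist (f (sSup S)) m = 0 := by
    linarith [hqm.dist_eq, hqs, hle, dist_nonneg (x := f (sSup S)) (y := m)]
  exact (dist_eq_zero.1 hbm0).symm

theorem exists_isGate_isGate (ht : IsRTree T) {A₁ A₂ : Set T} (hc₁ : IsClosed A₁)
    (hc₂ : IsClosed A₂) (hA₁ : IsBetweenConvex A₁) (hA₂ : IsBetweenConvex A₂)
    (hn₁ : A₁.Nonempty) (hn₂ : A₂.Nonempty) : ∃ b₁ b₂, IsGate A₁ b₁ b₂ ∧ IsGate A₂ b₂ b₁ := by
  obtain ⟨q, hq⟩ := hn₁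
  obtain ⟨p, hp⟩ := hn₂
  obtain ⟨b₁, hb₁, -, hlast₁⟩ := ht.exists_last_mem hc₁ hq p
  obtain ⟨b₂, hb₂, hpb₂, hlast₂⟩ := ht.exists_last_mem hc₂ hp b₁
  exact ⟨b₁, b₂, ht.isGate_of_forall_eq hA₁ hb₁ fun m hm hbm =>
    hlast₁ m hm (hpb₂.symm.trans_left hbm), ht.isGate_of_forall_eq hA₂ hb₂ hlast₂⟩

theorem isGate_of_between (ht : IsRTree T) {A : Set T} {b y y' : T} (h : IsGate A b y)
    (hy : Between b y y') (hb : b ≠ y) : IsGate A b y' :=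
  ⟨h.1, fun z hz => ht.between_trans_of_ne (h.2 z hz) hy hb⟩

theorem apply_eq_of_between (ht : IsRTree T) {b m y : T} (hb : φ b = b) (h₁ : Between b m y)
    (h₂ : Between b m (φ y)) : φ m = m := by
  have h := h₁.map φ.isometry
  rw [hb] at h
  refine ht.eq_of_between_of_dist_eq h h₂ ?_
  rw [← φ.dist_eq b m, hb]

theorem between_apply_of_isGate_fixed (ht : IsRTree T) {b y : T}
    (h : IsGate {x | φ x = x} b y) : Between y b (φ y) := by
  obtain ⟨m, hmy, hmφy, hy⟩ := ht.exists_median b y (φ y)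
  obtain rfl : m = b := (h.2 m (ht.apply_eq_of_between h.1 hmy hmφy)).eq_of_swap_left hmy
  exact hy

theorem between_of_isGate_axisSet (ht : IsRTree T) {b y : T} (h : IsGate (axisSet φ) b y) :
    Between y b (φ y) ∧ Between b (φ b) (φ y) := by
  by_cases hb : φ b = b
  · rw [axisSet_eq_of_apply_eq hb] at h
    refine ⟨ht.between_apply_of_isGate_fixed h, ?_⟩
    rw [hb]
    exact between_self_left b (φ y)
  · have hφ : Between b (φ b) (φ y) := (h.map fun _ => apply_mem_axisSet_iff).2 b h.1
    exact ⟨ht.between_trans_of_ne (h.2 _ (apply_mem_axisSet_iff.2 h.1)).symm hφ (Ne.symm hb), hφ⟩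

theorem transLen_trans_eq (ht : IsRTree T) {φ₁ φ₂ : T ≃ᵢ T} {b₁ b₂ : T}
    (h₁ : IsGate (axisSet φ₁) b₁ b₂) (h₂ : IsGate (axisSet φ₂) b₂ b₁) (hne : b₁ ≠ b₂) :
    transLen (φ₂.trans φ₁) = transLen φ₁ + transLen φ₂ + 2 * dist b₁ b₂ := by
  obtain ⟨hb₁φ₂b₁, hb₂φ₂b₂⟩ := ht.between_of_isGate_axisSet h₂
  have hb₁φ₂b₂ : Between b₁ b₂ (φ₂ b₂) := (h₂.2 _ (apply_mem_axisSet_iff.2 h₂.1)).symm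
  obtain ⟨hφ₂b₂, hψb₂⟩ := ht.between_of_isGate_axisSet (ht.isGate_of_between h₁ hb₁φ₂b₂ hne)
  obtain ⟨-, hψb₁⟩ := ht.between_of_isGate_axisSet (ht.isGate_of_between h₁ hb₁φ₂b₁ hne)
  have hψ : Between b₂ b₁ (φ₁ (φ₂ b₂)) := hφ₂b₂.trans_left_right hb₁φ₂b₂.symm
  have hd : dist b₁ (φ₁ (φ₂ b₂)) = dist b₁ (φ₁ b₁) + dist b₁ b₂ + dist b₂ (φ₂ b₂) := by
    rw [hψb₂.dist_eq, φ₁.dist_eq, hb₁φ₂b₂.dist_eq, add_assoc]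
  have hm : b₁ ≠ φ₁ (φ₂ b₂) := by
    intro h
    rw [← h, dist_self] at hd
    linarith [dist_pos.2 hne, dist_nonneg (x := b₁) (y := φ₁ b₁),
      dist_nonneg (x := b₂) (y := φ₂ b₂)]
  -- with `ψ = φ₂.trans φ₁`, the points `b₂, b₁, φ₁ b₁, ψ b₂, ψ b₁` lie in this order on a
  -- geodesic, so `b₂` is on the axis of `ψ`
  rw [ht.transLen_eq_of_between_apply (ht.between_apply_apply hψ
    (hψb₁.trans_right ((hb₁φ₂b₁.trans_right hb₂φ₂b₂).map φ₁.isometry)) hne.symm hm)]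
  simp only [IsometryEquiv.trans_apply]
  linarith [hψ.dist_eq, dist_comm b₁ b₂, mem_axisSet_iff.1 h₁.1, mem_axisSet_iff.1 h₂.1]

theorem add_lt_transLen_trans (ht : IsRTree T) [Nonempty T] {φ₁ φ₂ : T ≃ᵢ T}
    (h : Disjoint (axisSet φ₁) (axisSet φ₂)) :
    transLen φ₁ + transLen φ₂ < transLen (φ₂.trans φ₁) := by
  obtain ⟨b₁, b₂, h₁, h₂⟩ := ht.exists_isGate_isGate (isClosed_axisSet φ₁) (isClosed_axisSet φ₂)
    (ht.isBetweenConvex_axisSet φ₁) (ht.isBetweenConvex_axisSet φ₂) (ht.axisSet_nonempty φ₁)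
    (ht.axisSet_nonempty φ₂)
  have hne : b₁ ≠ b₂ := h.ne_of_mem h₁.1 h₂.1
  rw [ht.transLen_trans_eq h₁ h₂ hne]
  linarith [dist_pos.2 hne]

theorem nonempty_fixed_inter_axisSet (ht : IsRTree T) {g h : T ≃ᵢ T} {p : T} (hp : g p = p)
    (hle : transLen (h.trans g) ≤ transLen h) : ({x | g x = x} ∩ axisSet h).Nonempty := by
  have : Nonempty T := ⟨p⟩
  rw [← axisSet_eq_of_apply_eq hp, ← Set.not_disjoint_iff_nonempty_inter]
  intro hdisj
  linarith [ht.add_lt_transLen_trans hdisj, transLen_eq_zero_of_apply_eq hp]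

end IsRTree

theorem stmt6_general {T : Type*} [MetricSpace T] (htree : IsRTree T)
    (g : T ≃ᵢ T) (hgfix : ∃ x : T, g x = x) :
    ((∃ h h' : T ≃ᵢ T, IsHyperbolicIsom h ∧ IsHyperbolicIsom h' ∧
        transLen (h.trans g) ≤ transLen h ∧ transLen (h'.trans g) ≤ transLen h' ∧
        transLen h + transLen h' < transLen (h'.trans h)) →
      ∃ x y : T, x ≠ y ∧ g x = x ∧ g y = y) ∧
    ∀ h h' : T ≃ᵢ T, IsHyperbolicIsom h → IsHyperbolicIsom h' →
      (∃ x y : T, x ≠ y ∧ g x = x ∧ g y = y) →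
      ({x : T | g x = x} ∩ axisSet h).Nonempty →
      ({x : T | g x = x} ∩ axisSet h').Nonempty →
      Disjoint (axisSet h) (axisSet h') →
      transLen (h.trans g) ≤ transLen h ∧ transLen (h'.trans g) ≤ transLen h' ∧
        transLen h + transLen h' < transLen (h'.trans h) := by
  obtain ⟨x₀, hx₀⟩ := hgfix
  have : Nonempty T := ⟨x₀⟩
  have hg : axisSet g = {x | g x = x} := axisSet_eq_of_apply_eq hx₀
  have hg₀ : transLen g = 0 := transLen_eq_zero_of_apply_eq hx₀
  refine ⟨fun ⟨h, h', _, _, hle, hle', hlt⟩ => ?_,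
    fun h h' _ _ _ ⟨p, hp, hph⟩ ⟨p', hp', hph'⟩ hdisj => ?_⟩
  · obtain ⟨x, hx, hxh⟩ := htree.nonempty_fixed_inter_axisSet hx₀ hle
    obtain ⟨y, hy, hyh'⟩ := htree.nonempty_fixed_inter_axisSet hx₀ hle'
    refine ⟨x, y, ?_, hx, hy⟩
    rintro rfl
    linarith [transLen_trans_le hxh hyh']
  · rw [← hg] at hp hp'
    exact ⟨by linarith [transLen_trans_le hp hph], by linarith [transLen_trans_le hp' hph'],
      htree.add_lt_transLen_trans hdisj⟩

/-- Let T be an ℝ-tree and g an isometry of T with a fixed point. If there exist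
two hyperbolic isometries h and h′ of T such that ‖gh‖ ≤ ‖h‖, ‖gh′‖ ≤ ‖h′‖, and
‖hh′‖ > ‖h‖ + ‖h′‖, then g fixes an arc (a nondegenerate segment) of T. Conversely, if g fixes
an arc of T and there exist hyperbolic isometries h, h′ whose axes meet the fixed point set of g
but are disjoint from each other, then these three translation-length inequalities hold. -/
theorem stmt6 {T : Type*} [MetricSpace T] [Nonempty T] (htree : IsRTree T)
    (g : T ≃ᵢ T) (hgfix : ∃ x : T, g x = x) :
    ((∃ h h' : T ≃ᵢ T, IsHyperbolicIsom h ∧ IsHyperbolicIsom h' ∧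
        transLen (h.trans g) ≤ transLen h ∧ transLen (h'.trans g) ≤ transLen h' ∧
        transLen h + transLen h' < transLen (h'.trans h)) →
      ∃ x y : T, x ≠ y ∧ g x = x ∧ g y = y) ∧
    ∀ h h' : T ≃ᵢ T, IsHyperbolicIsom h → IsHyperbolicIsom h' →
      (∃ x y : T, x ≠ y ∧ g x = x ∧ g y = y) →
      ({x : T | g x = x} ∩ axisSet h).Nonempty →
      ({x : T | g x = x} ∩ axisSet h').Nonempty →
      Disjoint (axisSet h) (axisSet h') →
      transLen (h.trans g) ≤ transLen h ∧ transLen (h'.trans g) ≤ transLen h' ∧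
        transLen h + transLen h' < transLen (h'.trans h) :=
  stmt6_general htree g hgfix
end

section
/- Let X be a hyperbolic geodesic metric space and G a group acting by isometries on X. If G contains a loxodromic element and any two loxodromic elements of G share both fixed points in ∂X (G is lineal), then the limit set of G in ∂X consists of exactly these two common fixed points. -/
/-!
A loxodromic orbit `n ↦ hⁿ • z` is a quasi-geodesic. For a large power `h ^ a` the orbit points
of `h ^ a` are spaced much further apart than the Gromov product at each middle point, and a
local-to-global argument in the `δ`-hyperbolic space bounds `(hⁱ z | hᵏ z)_{hʲ z}` uniformly for
`i ≤ j ≤ k`. Hence the two half-orbits of `g₀` converge to two distinct boundary points `ξ±`.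

For `w : G`, the endpoints of `w g₀ w⁻¹` are the `w`-translates of those of `g₀`; lineality says
they are `ξ±` again, which forces `w • y` to lie uniformly close to the axis of `g₀`, on one side
of `x` or the other. Points far out on opposite sides have small Gromov product at `x`, so a
Gromov sequence `w n • y` eventually stays on one side and converges to `ξ+` or to `ξ-`.
-/

open Filter

/-- A metric space is geodesic if any two points are joined by an isometric segment. -/
def IsGeodesicSpace (X : Type*) [MetricSpace X] : Prop :=
  ∀ x y : X, ∃ f : ℝ → X, f 0 = x ∧ f (dist x y) = y ∧
    ∀ s ∈ Set.Icc (0 : ℝ) (dist x y), ∀ t ∈ Set.Icc (0 : ℝ) (dist x y),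
      dist (f s) (f t) = |s - t|

/-- The Gromov product (x|y)_o. -/
noncomputable def gromovProd {X : Type*} [MetricSpace X] (o x y : X) : ℝ :=
  (dist o x + dist o y - dist x y) / 2

/-- δ-hyperbolicity via the Gromov product four-point inequality. -/
def IsGromovHyperbolic (X : Type*) [MetricSpace X] (δ : ℝ) : Prop :=
  ∀ o x y z : X, min (gromovProd o x y) (gromovProd o y z) - δ ≤ gromovProd o x z

/-- A sequence converges to a point of the Gromov boundary if the Gromov products of its
terms tend to infinity. -/
def GromovSeq {X : Type*} [MetricSpace X] (u : ℕ → X) : Prop :=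
  ∀ o : X, Tendsto (fun p : ℕ × ℕ => gromovProd o (u p.1) (u p.2)) atTop atTop

/-- Two sequences converge to the same boundary point if the mutual Gromov products tend to
infinity. -/
def GromovEquiv {X : Type*} [MetricSpace X] (u v : ℕ → X) : Prop :=
  GromovSeq u ∧ GromovSeq v ∧
    ∀ o : X, Tendsto (fun p : ℕ × ℕ => gromovProd o (u p.1) (v p.2)) atTop atTop

/-- An isometric group action is loxodromic at g if the stable translation length
lim d(x, gⁿx)/n is positive. -/
def Loxodromic {G X : Type*} [Group G] [MulAction G X] [MetricSpace X] (g : G) : Prop :=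
  ∃ L : ℝ, 0 < L ∧ ∀ x : X, Tendsto (fun n : ℕ => dist x ((g ^ n) • x) / n) atTop (nhds L)

section GromovProduct
variable {X : Type*} [MetricSpace X]

theorem gromovProd_comm (o x y : X) : gromovProd o x y = gromovProd o y x := by
  unfold gromovProd; rw [dist_comm x y]; ring

theorem gromovProd_nonneg (o x y : X) : 0 ≤ gromovProd o x y := by
  have := dist_triangle x o y
  unfold gromovProd; rw [dist_comm x o] at this; linarith

theorem gromovProd_self (o x : X) : gromovProd o x x = dist o x := by
  simp [gromovProd]

theorem gromovProd_base_right (o x : X) : gromovProd o x o = 0 := by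
  simp [gromovProd, dist_comm]

theorem gromovProd_add_gromovProd (o x y : X) :
    gromovProd o x y + gromovProd x o y = dist o x := by
  unfold gromovProd; rw [dist_comm x o]; ring

theorem gromovProd_le_add_dist (o o' x x' y y' : X) :
    gromovProd o x y ≤ gromovProd o' x' y' + dist o o' + dist x x' + dist y y' := by
  have h₁ := dist_triangle4 o o' x' x
  have h₂ := dist_triangle4 o o' y' y
  have h₃ := dist_triangle4 x' x y y'
  unfold gromovProd
  rw [dist_comm x' x] at h₁ h₃
  rw [dist_comm y' y] at h₂
  linarith

end GromovProduct

namespace IsGromovHyperbolic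
variable {X : Type*} [MetricSpace X] {δ : ℝ} (hX : IsGromovHyperbolic X δ)
include hX

theorem nonneg (o : X) : 0 ≤ δ := by
  simpa using hX o o o o

theorem sub_le_gromovProd {o x y z : X} {t : ℝ} (hxy : t ≤ gromovProd o x y)
    (hyz : t ≤ gromovProd o y z) : t - δ ≤ gromovProd o x z :=
  (sub_le_sub_right (le_min hxy hyz) δ).trans (hX o x y z)

theorem gromovProd_le_of_lt {o x y z : X} (h : gromovProd o x z + δ < gromovProd o y z) :
    gromovProd o x y ≤ gromovProd o x z + δ := by
  have := hX o x y z
  rcases min_cases (gromovProd o x y) (gromovProd o y z) with ⟨hmin, _⟩ | ⟨hmin, _⟩ <;>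
    rw [hmin] at this <;> linarith

theorem gromovProd_le_of_near {o e₁ e₂ f₁ f₂ : X}
    (h₁ : gromovProd o e₁ e₂ + 2 * δ < gromovProd o f₁ e₁)
    (h₂ : gromovProd o e₁ e₂ + 2 * δ < gromovProd o f₂ e₂) :
    gromovProd o f₁ f₂ ≤ gromovProd o e₁ e₂ + 2 * δ := by
  have hδ := hX.nonneg o
  have he := gromovProd_comm o e₁ e₂
  have hf := gromovProd_comm o f₁ e₂
  have hfe : gromovProd o e₂ f₁ ≤ gromovProd o e₂ e₁ + δ := hX.gromovProd_le_of_lt (by linarith)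
  have hff : gromovProd o f₁ f₂ ≤ gromovProd o f₁ e₂ + δ := hX.gromovProd_le_of_lt (by linarith)
  linarith

section Chain
variable {p : ℤ → X} {ℓ S : ℝ} (hstep : ∀ i, dist (p i) (p (i + 1)) = ℓ)
  (hvert : ∀ i, gromovProd (p i) (p (i - 1)) (p (i + 1)) ≤ S) (hℓ : 2 * S + 3 * δ < ℓ)
include hX hstep hvert hℓ

theorem gromovProd_chain_pred_le {j k : ℤ} (hjk : j ≤ k) :
    gromovProd (p j) (p (j - 1)) (p k) ≤ S + δ := by
  have hδ := hX.nonneg (p 0)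
  have hS := (gromovProd_nonneg _ _ _).trans (hvert 0)
  induction j, hjk using Int.leInductionDown with
  | base => rw [gromovProd_base_right]; linarith
  | pred j hjk ih =>
    have hℓj : dist (p (j - 1)) (p j) = ℓ := by simpa using hstep (j - 1)
    have hv : gromovProd (p (j - 1)) (p (j - 1 - 1)) (p j) ≤ S := by simpa using hvert (j - 1)
    have hsplit := gromovProd_add_gromovProd (p (j - 1)) (p j) (p k)
    have := hX.gromovProd_le_of_lt (o := p (j - 1)) (x := p (j - 1 - 1)) (y := p k) (z := p j)
      (by rw [gromovProd_comm _ (p k)]; linarith)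
    linarith

theorem gromovProd_chain_succ_le {i j : ℤ} (hij : i ≤ j) :
    gromovProd (p j) (p i) (p (j + 1)) ≤ S + δ := by
  have := hX.gromovProd_chain_pred_le (p := fun i => p (-i))
    (fun i => by simpa [dist_comm] using hstep (-(i + 1)))
    (fun i => by simpa [gromovProd_comm, sub_eq_add_neg, add_comm] using hvert (-i)) hℓ
    (neg_le_neg hij)
  simpa [gromovProd_comm, add_comm] using this

theorem gromovProd_chain_le {i j k : ℤ} (hij : i ≤ j) (hjk : j ≤ k) :
    gromovProd (p j) (p i) (p k) ≤ S + 2 * δ := by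
  have hδ := hX.nonneg (p 0)
  have hS := (gromovProd_nonneg _ _ _).trans (hvert 0)
  rcases hjk.eq_or_lt with rfl | hjk
  · rw [gromovProd_base_right]; linarith
  have hnext := hX.gromovProd_chain_pred_le hstep hvert hℓ (j := j + 1) (k := k) (by omega)
  rw [add_sub_cancel_right] at hnext
  have hprev := hX.gromovProd_chain_succ_le hstep hvert hℓ hij
  have hsplit := gromovProd_add_gromovProd (p j) (p (j + 1)) (p k)
  have := hX.gromovProd_le_of_lt (o := p j) (x := p i) (y := p k) (z := p (j + 1))
    (by rw [gromovProd_comm (p j) (p k)]; linarith [hstep j])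
  linarith

end Chain

end IsGromovHyperbolic

theorem tendsto_min_prod_atTop {α β γ : Type*} [Preorder α] [Preorder β] [LinearOrder γ]
    {f : α → γ} {g : β → γ} (hf : Tendsto f atTop atTop) (hg : Tendsto g atTop atTop) :
    Tendsto (fun p : α × β => min (f p.1) (g p.2)) atTop atTop := by
  rw [← prod_atTop_atTop_eq]
  exact tendsto_inf_atTop _ (hf.comp tendsto_fst) (hg.comp tendsto_snd)

section GromovSeq
variable {X : Type*} [MetricSpace X]

theorem GromovSeq.tendsto_dist {p : ℕ → X} (hp : GromovSeq p) (o : X) :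
    Tendsto (fun n => dist o (p n)) atTop atTop := by
  simpa only [Function.comp_def, gromovProd_self] using (hp o).comp tendsto_atTop_diagonal

theorem tendsto_gromovProd_of_dist_le {o : X} {u u' q : ℕ → X} {D : ℝ}
    (h : Tendsto (fun p : ℕ × ℕ => gromovProd o (u p.1) (q p.2)) atTop atTop)
    (hD : ∀ n, dist (u n) (u' n) ≤ D) :
    Tendsto (fun p : ℕ × ℕ => gromovProd o (u' p.1) (q p.2)) atTop atTop := by
  refine tendsto_atTop_mono (fun p => ?_) (tendsto_atTop_add_const_right _ (-D) h)
  have := gromovProd_le_add_dist o o (u p.1) (u' p.1) (q p.2) (q p.2)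
  simp only [dist_self] at this
  linarith [hD p.1]

theorem IsGromovHyperbolic.eventually_gromovProd_le {δ : ℝ} (hX : IsGromovHyperbolic X δ)
    {o : X} {u u' q q' : ℕ → X} {C : ℝ} (hq : ∀ K, gromovProd o (q K) (q' K) ≤ C)
    (hu : Tendsto (fun p : ℕ × ℕ => gromovProd o (u p.1) (q p.2)) atTop atTop)
    (hu' : Tendsto (fun p : ℕ × ℕ => gromovProd o (u' p.1) (q' p.2)) atTop atTop) :
    ∀ᶠ m in atTop, gromovProd o (u m) (u' m) ≤ C + 2 * δ := by
  obtain ⟨⟨N, K⟩, hN⟩ := eventually_atTop.1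
    ((hu.eventually_gt_atTop (C + 2 * δ)).and (hu'.eventually_gt_atTop (C + 2 * δ)))
  refine eventually_atTop.2 ⟨N, fun m hm => ?_⟩
  obtain ⟨h₁, h₂⟩ := hN (m, K) ⟨hm, le_rfl⟩
  have := hX.gromovProd_le_of_near (o := o) (e₁ := q K) (e₂ := q' K) (f₁ := u m) (f₂ := u' m)
    (by linarith [hq K]) (by linarith [hq K])
  linarith [hq K]

end GromovSeq

section Action
variable {G X : Type*} [Group G] [MulAction G X] [MetricSpace X] [IsIsometricSMul G X]

theorem gromovProd_smul (g : G) (o x y : X) :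
    gromovProd (g • o) (g • x) (g • y) = gromovProd o x y := by
  simp [gromovProd]

theorem dist_zpow_smul (h : G) (z : X) (i k : ℤ) :
    dist (h ^ i • z) (h ^ k • z) = dist z (h ^ (k - i) • z) := by
  rw [← dist_smul (h ^ i) z, ← mul_smul, ← zpow_add, add_sub_cancel]

theorem gromovProd_zpow_smul (h : G) (z : X) (i j k : ℤ) :
    gromovProd (h ^ j • z) (h ^ i • z) (h ^ k • z) =
      gromovProd z (h ^ (i - j) • z) (h ^ (k - j) • z) := by
  rw [← gromovProd_smul (h ^ j) z, ← mul_smul, ← mul_smul, ← zpow_add, ← zpow_add,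
    add_sub_cancel, add_sub_cancel]

theorem dist_pow_smul_le (h : G) (z : X) (n : ℕ) : dist z (h ^ n • z) ≤ n * dist z (h • z) := by
  induction n with
  | zero => simp
  | succ n ih =>
    calc dist z (h ^ (n + 1) • z) ≤ dist z (h ^ n • z) + dist (h ^ n • z) (h ^ (n + 1) • z) :=
          dist_triangle _ _ _
      _ = dist z (h ^ n • z) + dist z (h • z) := by rw [pow_succ, mul_smul, dist_smul]
      _ ≤ (n + 1 : ℕ) * dist z (h • z) := by push_cast; linarith

theorem subadditive_dist_pow_smul (h : G) (z : X) :
    Subadditive fun n => dist z (h ^ n • z) := fun m n =>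
  calc dist z (h ^ (m + n) • z) ≤ dist z (h ^ m • z) + dist (h ^ m • z) (h ^ (m + n) • z) :=
        dist_triangle _ _ _
    _ = dist z (h ^ m • z) + dist z (h ^ n • z) := by rw [pow_add, mul_smul, dist_smul]

theorem mul_le_dist_pow_smul {h : G} {z : X} {L : ℝ}
    (hL : Tendsto (fun n : ℕ => dist z (h ^ n • z) / n) atTop (nhds L)) (n : ℕ) :
    L * n ≤ dist z (h ^ n • z) := by
  have hsub := subadditive_dist_pow_smul h z
  have hbdd : BddBelow (Set.range fun n : ℕ => dist z (h ^ n • z) / n) :=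
    ⟨0, by rintro _ ⟨n, rfl⟩; positivity⟩
  obtain rfl : L = hsub.lim := tendsto_nhds_unique hL (hsub.tendsto_lim hbdd)
  rcases n.eq_zero_or_pos with rfl | hn
  · simp
  · have := hsub.lim_le_div hbdd hn.ne'
    rwa [le_div_iff₀ (by exact_mod_cast hn)] at this

theorem Loxodromic.inv {h : G} (hh : Loxodromic (X := X) h) : Loxodromic (X := X) h⁻¹ := by
  obtain ⟨L, hL, hlim⟩ := hh
  refine ⟨L, hL, fun x => ?_⟩
  have hdist : ∀ n : ℕ, dist x (h⁻¹ ^ n • x) = dist x (h ^ n • x) := fun n => by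
    rw [← dist_smul (h ^ n), inv_pow, smul_inv_smul, dist_comm]
  simpa only [hdist] using hlim x

theorem Loxodromic.conj {h : G} (hh : Loxodromic (X := X) h) (v : G) :
    Loxodromic (X := X) (v * h * v⁻¹) := by
  obtain ⟨L, hL, hlim⟩ := hh
  refine ⟨L, hL, fun x => ?_⟩
  have hdist : ∀ n : ℕ, dist x ((v * h * v⁻¹) ^ n • x) = dist (v⁻¹ • x) (h ^ n • v⁻¹ • x) :=
    fun n => by rw [conj_pow, mul_smul, mul_smul, ← dist_smul v⁻¹, inv_smul_smul]
  simpa only [hdist] using hlim (v⁻¹ • x)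

theorem Loxodromic.exists_pow_gap {h : G} (hh : Loxodromic (X := X) h) (z : X) (R : ℝ) :
    ∃ a : ℕ, 0 < a ∧ dist z (h ^ a • z) + R < dist z (h ^ (2 * a) • z) := by
  obtain ⟨L, hL, hlim⟩ := hh
  have hslow : ∀ᶠ a : ℕ in atTop, dist z (h ^ a • z) / a < L + L / 2 :=
    (hlim z).eventually (gt_mem_nhds (by linarith))
  have hlarge : ∀ᶠ a : ℕ in atTop, 2 * R < L * a :=
    (tendsto_natCast_atTop_atTop.const_mul_atTop hL).eventually_gt_atTop _
  obtain ⟨a, hslow, hlarge, ha⟩ := (hslow.and (hlarge.and (eventually_gt_atTop 0))).exists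
  have hdouble := mul_le_dist_pow_smul (hlim z) (2 * a)
  rw [div_lt_iff₀ (by exact_mod_cast ha)] at hslow
  push_cast at hdouble
  exact ⟨a, ha, by linarith⟩

end Action

/-- `g` and `h` have the same two endpoints on `∂X`, possibly in opposite order; the endpoints
are represented by the forward and backward orbits of `z`. -/
def SameEndpoints {G X : Type*} [Group G] [MulAction G X] [MetricSpace X] (g h : G) (z : X) :
    Prop :=
  (GromovEquiv (fun n => g ^ n • z) (fun n => h ^ n • z) ∧
      GromovEquiv (fun n => g⁻¹ ^ n • z) (fun n => h⁻¹ ^ n • z)) ∨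
    (GromovEquiv (fun n => g ^ n • z) (fun n => h⁻¹ ^ n • z) ∧
      GromovEquiv (fun n => g⁻¹ ^ n • z) (fun n => h ^ n • z))

/-- A Gromov-product form of "the orbit `i ↦ hⁱ • z` is a quasi-geodesic": in a geodesic
hyperbolic space, `(x | y)_w` is up to `δ` the distance from `w` to a geodesic from `x` to `y`. -/
def OrbitTaut {G X : Type*} [Group G] [MulAction G X] [MetricSpace X] (h : G) (z : X)
    (B : ℝ) : Prop :=
  ∀ i j k : ℤ, i ≤ j → j ≤ k → gromovProd (h ^ j • z) (h ^ i • z) (h ^ k • z) ≤ B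

section OrbitTaut
variable {G X : Type*} [Group G] [MulAction G X] [MetricSpace X] {h : G} {z : X} {B : ℝ}

theorem IsGromovHyperbolic.orbitTaut_of_dist_lt [IsIsometricSMul G X] {δ : ℝ}
    (hX : IsGromovHyperbolic X δ) (hgap : dist z (h • z) + 3 * δ < dist z (h ^ 2 • z)) :
    OrbitTaut h z (gromovProd z (h⁻¹ • z) (h • z) + 2 * δ) := by
  intro i j k hij hjk
  refine hX.gromovProd_chain_le (p := fun i => h ^ i • z) (ℓ := dist z (h • z))
    (fun i => by simp [dist_zpow_smul]) (fun i => by simp [gromovProd_zpow_smul]) ?_ hij hjk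
  have hback : dist z (h⁻¹ • z) = dist z (h • z) := by
    rw [← dist_smul h, smul_inv_smul, dist_comm]
  have hacross : dist (h⁻¹ • z) (h • z) = dist z (h ^ 2 • z) := by
    rw [← dist_smul h, smul_inv_smul, ← mul_smul, sq]
  unfold gromovProd
  rw [hback, hacross]
  linarith

theorem OrbitTaut.of_pow [IsIsometricSMul G X] {a : ℕ} (ha : 0 < a) (hB : OrbitTaut (h ^ a) z B) :
    OrbitTaut h z (B + 3 * (a * dist z (h • z))) := by
  have hround : ∀ n : ℤ, dist (h ^ n • z) ((h ^ a) ^ (n / a) • z) ≤ a * dist z (h • z) := by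
    intro n
    have hrem : n - a * (n / a) = (n % a).toNat := by
      rw [Int.toNat_of_nonneg (Int.emod_nonneg _ (by omega)), Int.emod_def]
    have hlt : (n % a).toNat < a := by
      have := Int.emod_lt_of_pos n (by omega : (0 : ℤ) < a); omega
    rw [← zpow_natCast, ← zpow_mul, dist_comm, dist_zpow_smul, hrem, zpow_natCast]
    calc dist z (h ^ (n % a).toNat • z) ≤ (n % a).toNat * dist z (h • z) := dist_pow_smul_le _ _ _
      _ ≤ a * dist z (h • z) := by gcongr
  intro i j k hij hjk
  have hsub := hB (i / a) (j / a) (k / a) (Int.ediv_le_ediv (by omega) hij)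
    (Int.ediv_le_ediv (by omega) hjk)
  have := gromovProd_le_add_dist (h ^ j • z) ((h ^ a) ^ (j / a) • z) (h ^ i • z)
    ((h ^ a) ^ (i / a) • z) (h ^ k • z) ((h ^ a) ^ (k / a) • z)
  linarith [hround i, hround j, hround k]

theorem Loxodromic.exists_orbitTaut [IsIsometricSMul G X] {δ : ℝ} (hX : IsGromovHyperbolic X δ)
    (hh : Loxodromic (X := X) h) (z : X) : ∃ B, OrbitTaut h z B := by
  obtain ⟨a, ha, hgap⟩ := hh.exists_pow_gap z (3 * δ)
  rw [pow_mul'] at hgap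
  exact ⟨_, (hX.orbitTaut_of_dist_lt hgap).of_pow ha⟩

theorem OrbitTaut.inv (hB : OrbitTaut h z B) : OrbitTaut h⁻¹ z B := by
  intro i j k hij hjk
  simpa only [inv_zpow', gromovProd_comm] using hB (-k) (-j) (-i) (by omega) (by omega)

theorem OrbitTaut.gromovProd_inv_pow_pow_le (hB : OrbitTaut h z B) (j k : ℕ) :
    gromovProd z (h⁻¹ ^ j • z) (h ^ k • z) ≤ B := by
  simpa [← zpow_natCast, inv_zpow'] using hB (-j) 0 k (by omega) (by omega)

theorem OrbitTaut.dist_sub_le_gromovProd (hB : OrbitTaut h z B) {j k : ℕ} (hjk : j ≤ k) :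
    dist z (h ^ j • z) - B ≤ gromovProd z (h ^ j • z) (h ^ k • z) := by
  have := hB 0 j k (by omega) (by omega)
  have hsplit := gromovProd_add_gromovProd z (h ^ j • z) (h ^ k • z)
  simp only [zpow_zero, one_smul, zpow_natCast] at this
  linarith

end OrbitTaut

namespace OrbitTaut
variable {G X : Type*} [Group G] [MulAction G X] [MetricSpace X] {g : G} {x : X} {B δ : ℝ}

theorem not_gromovEquiv (hB : OrbitTaut g x B) :
    ¬GromovEquiv (fun n => g ^ n • x) (fun n => g⁻¹ ^ n • x) := fun hE => by
  obtain ⟨⟨j, k⟩, hjk⟩ := ((hE.2.2 x).eventually_gt_atTop B).exists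
  exact hjk.not_ge (by rw [gromovProd_comm]; exact hB.gromovProd_inv_pow_pow_le k j)

theorem gromovSeq [IsIsometricSMul G X] (hB : OrbitTaut g x B) (hh : Loxodromic (X := X) g) :
    GromovSeq fun n => g ^ n • x := by
  obtain ⟨L, hL, hlim⟩ := hh
  intro o
  have hbound : ∀ n k : ℕ,
      min (L * n) (L * k) - B - dist x o ≤ gromovProd o (g ^ n • x) (g ^ k • x) := by
    intro n k
    wlog hnk : n ≤ k generalizing n k
    · rw [min_comm, gromovProd_comm]; exact this k n (by omega)
    have := gromovProd_le_add_dist x o (g ^ n • x) (g ^ n • x) (g ^ k • x) (g ^ k • x)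
    simp only [dist_self] at this
    linarith [min_le_left (L * n) (L * k), hB.dist_sub_le_gromovProd hnk,
      mul_le_dist_pow_smul (hlim x) n]
  have hlin : Tendsto (fun n : ℕ => L * n) atTop atTop :=
    tendsto_natCast_atTop_atTop.const_mul_atTop hL
  have hmin := tendsto_min_prod_atTop hlin hlin
  exact tendsto_atTop_mono (fun p => hbound p.1 p.2)
    (tendsto_atTop_add_const_right _ _ (tendsto_atTop_add_const_right _ _ hmin))

theorem gromovProd_le_of_opposite (hX : IsGromovHyperbolic X δ) (hB : OrbitTaut g x B)
    {p q : X} {C : ℝ} {j k : ℕ} (hp : gromovProd p x (g ^ k • x) ≤ C)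
    (hq : gromovProd q x (g⁻¹ ^ j • x) ≤ C) (hpx : B + C + 2 * δ < dist x p)
    (hqx : B + C + 2 * δ < dist x q) : gromovProd x p q ≤ B + 2 * δ := by
  have hopp : gromovProd x (g ^ k • x) (g⁻¹ ^ j • x) ≤ B := by
    rw [gromovProd_comm]; exact hB.gromovProd_inv_pow_pow_le j k
  have := hX.gromovProd_le_of_near (o := x) (e₁ := g ^ k • x) (e₂ := g⁻¹ ^ j • x)
    (f₁ := p) (f₂ := q)
    (by linarith [gromovProd_add_gromovProd x p (g ^ k • x)])
    (by linarith [gromovProd_add_gromovProd x q (g⁻¹ ^ j • x)])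
  linarith

theorem gromovEquiv_of_eventually [IsIsometricSMul G X] (hX : IsGromovHyperbolic X δ)
    (hB : OrbitTaut g x B) (hh : Loxodromic (X := X) g) {p : ℕ → X} (hp : GromovSeq p) {C : ℝ}
    (hside : ∀ᶠ n in atTop, ∀ᶠ m in atTop, gromovProd (p n) x (g ^ m • x) ≤ C) :
    GromovEquiv p fun n => g ^ n • x := by
  refine ⟨hp, hB.gromovSeq hh, fun o => ?_⟩
  obtain ⟨L, hL, hlim⟩ := hh
  have hbound : ∀ᶠ n in atTop, ∀ k : ℕ,
      min (dist x (p n) - C) (L * k - B) - δ - dist x o ≤ gromovProd o (p n) (g ^ k • x) := by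
    filter_upwards [hside] with n hn k
    obtain ⟨m, hm, hkm⟩ := (hn.and (eventually_ge_atTop k)).exists
    have hfar : dist x (p n) - C ≤ gromovProd x (p n) (g ^ m • x) := by
      linarith [gromovProd_add_gromovProd x (p n) (g ^ m • x)]
    have hdeep : L * k - B ≤ gromovProd x (g ^ m • x) (g ^ k • x) := by
      rw [gromovProd_comm]
      linarith [hB.dist_sub_le_gromovProd hkm, mul_le_dist_pow_smul (hlim x) k]
    have := hX.sub_le_gromovProd ((min_le_left _ _).trans hfar) ((min_le_right _ _).trans hdeep)
    have := gromovProd_le_add_dist x o (p n) (p n) (g ^ k • x) (g ^ k • x)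
    simp only [dist_self] at this
    linarith
  obtain ⟨N, hN⟩ := eventually_atTop.1 hbound
  have hlow := tendsto_min_prod_atTop (tendsto_atTop_add_const_right _ (-C) (hp.tendsto_dist x))
    (tendsto_atTop_add_const_right _ (-B) (tendsto_natCast_atTop_atTop.const_mul_atTop hL))
  refine tendsto_atTop_mono' _ ?_ (tendsto_atTop_add_const_right _ (-(δ + dist x o)) hlow)
  filter_upwards [eventually_ge_atTop (N, 0)] with q hq
  have := hN q.1 hq.1 q.2
  simp only [← sub_eq_add_neg] at *
  linarith

theorem eventually_gromovProd_le [IsIsometricSMul G X] (hX : IsGromovHyperbolic X δ) {y : X}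
    (hB : OrbitTaut g y B) (v : G) (x : X) (hend : SameEndpoints g (v * g * v⁻¹) (v • y)) :
    ∀ᶠ m in atTop, gromovProd (v • y) (g⁻¹ ^ m • x) (g ^ m • x) ≤ B + 2 * δ := by
  have hc : ∀ K : ℕ, (v * g * v⁻¹) ^ K • v • y = v • g ^ K • y := fun K => by
    rw [conj_pow, mul_smul, mul_smul, inv_smul_smul]
  have hc' : ∀ K : ℕ, (v * g * v⁻¹)⁻¹ ^ K • v • y = v • g⁻¹ ^ K • y := fun K => by
    rw [conj_inv, conj_pow, mul_smul, mul_smul, inv_smul_smul]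
  have hq : ∀ K : ℕ,
      gromovProd (v • y) ((v * g * v⁻¹)⁻¹ ^ K • v • y) ((v * g * v⁻¹) ^ K • v • y) ≤ B := by
    intro K
    rw [hc, hc', gromovProd_smul]; exact hB.gromovProd_inv_pow_pow_le K K
  have hmove : ∀ (k : G) (m : ℕ), dist (k ^ m • v • y) (k ^ m • x) ≤ dist (v • y) x :=
    fun k m => (dist_smul (k ^ m) (v • y) x).le
  have hclose : ∀ k k' : G, GromovEquiv (fun n => k ^ n • v • y) (fun n => k' ^ n • v • y) →
      Tendsto (fun p : ℕ × ℕ => gromovProd (v • y) (k ^ p.1 • x) (k' ^ p.2 • v • y)) atTop atTop :=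
    fun k k' hkk' => tendsto_gromovProd_of_dist_le (u := fun n => k ^ n • v • y)
      (u' := fun n => k ^ n • x) (q := fun n => k' ^ n • v • y) (hkk'.2.2 (v • y)) (hmove k)
  rcases hend with ⟨h₁, h₂⟩ | ⟨h₁, h₂⟩
  · exact hX.eventually_gromovProd_le hq (hclose _ _ h₂) (hclose _ _ h₁)
  · exact hX.eventually_gromovProd_le (fun K => (gromovProd_comm _ _ _).trans_le (hq K))
      (hclose _ _ h₂) (hclose _ _ h₁)

theorem gromovEquiv_or_gromovEquiv [IsIsometricSMul G X] (hX : IsGromovHyperbolic X δ)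
    (hg : Loxodromic (X := X) g) {y : X} {Bx By : ℝ} (hx : OrbitTaut g x Bx)
    (hy : OrbitTaut g y By) {w : ℕ → G}
    (hw : GromovSeq fun n => w n • y)
    (hend : ∀ n, SameEndpoints g (w n * g * (w n)⁻¹) (w n • y)) :
    GromovEquiv (fun n => w n • y) (fun n => g ^ n • x) ∨
      GromovEquiv (fun n => w n • y) (fun n => g⁻¹ ^ n • x) := by
  set C := By + 3 * δ
  have hside : ∀ n, ∀ᶠ m in atTop,
      gromovProd (w n • y) x (g ^ m • x) ≤ C ∨ gromovProd (w n • y) x (g⁻¹ ^ m • x) ≤ C := by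
    intro n
    filter_upwards [hy.eventually_gromovProd_le hX (w n) x (hend n)] with m hm
    have := hX (w n • y) (g⁻¹ ^ m • x) x (g ^ m • x)
    rw [gromovProd_comm _ (g⁻¹ ^ m • x)] at this
    exact (min_le_iff.1 (by linarith : min _ _ ≤ C)).symm
  obtain ⟨N₁, hfar⟩ := eventually_atTop.1
    ((hw.tendsto_dist x).eventually_gt_atTop (Bx + C + 2 * δ))
  obtain ⟨N₂, hsep⟩ := eventually_atTop_prod_self'.1 ((hw x).eventually_gt_atTop (Bx + 2 * δ))
  have hexcl : ∀ n ≥ max N₁ N₂, ∀ n' ≥ max N₁ N₂, ∀ m m' : ℕ,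
      gromovProd (w n • y) x (g ^ m • x) ≤ C → ¬gromovProd (w n' • y) x (g⁻¹ ^ m' • x) ≤ C :=
    fun n hn n' hn' m m' hP hQ => (hx.gromovProd_le_of_opposite hX hP hQ
      (hfar n (le_of_max_le_left hn)) (hfar n' (le_of_max_le_left hn'))).not_gt
      (hsep n (le_of_max_le_right hn) n' (le_of_max_le_right hn'))
  by_cases hP : ∃ n ≥ max N₁ N₂, ∃ m, gromovProd (w n • y) x (g ^ m • x) ≤ C
  · obtain ⟨n₀, hn₀, m₀, hm₀⟩ := hP
    refine .inl (hx.gromovEquiv_of_eventually hX hg hw (C := C) ?_)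
    filter_upwards [eventually_ge_atTop (max N₁ N₂)] with n hn
    filter_upwards [hside n] with m hm
    exact hm.resolve_right (hexcl n₀ hn₀ n hn m₀ m hm₀)
  · push Not at hP
    refine .inr (hx.inv.gromovEquiv_of_eventually hX hg.inv hw (C := C) ?_)
    filter_upwards [eventually_ge_atTop (max N₁ N₂)] with n hn
    filter_upwards [hside n] with m hm
    exact hm.resolve_left (hP n hn m).not_ge

end OrbitTaut

theorem stmt10_general {G X : Type*} [Group G] [MulAction G X] [MetricSpace X]
    (δ : ℝ) (hhyp : IsGromovHyperbolic X δ)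
    (hiso : ∀ g : G, Isometry (fun x : X => g • x))
    (g₀ : G) (hg₀ : Loxodromic (X := X) g₀)
    (hlineal : ∀ g h : G, Loxodromic (X := X) g → Loxodromic (X := X) h → ∀ x : X,
      (GromovEquiv (fun n => (g ^ n) • x) (fun n => (h ^ n) • x) ∧
        GromovEquiv (fun n => (g⁻¹ ^ n) • x) (fun n => (h⁻¹ ^ n) • x)) ∨
      (GromovEquiv (fun n => (g ^ n) • x) (fun n => (h⁻¹ ^ n) • x) ∧
        GromovEquiv (fun n => (g⁻¹ ^ n) • x) (fun n => (h ^ n) • x))) :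
    ∀ x : X,
      GromovSeq (fun n => (g₀ ^ n) • x) ∧
      GromovSeq (fun n => (g₀⁻¹ ^ n) • x) ∧
      ¬ GromovEquiv (fun n => (g₀ ^ n) • x) (fun n => (g₀⁻¹ ^ n) • x) ∧
      ∀ (y : X) (w : ℕ → G), GromovSeq (fun n => w n • y) →
        GromovEquiv (fun n => w n • y) (fun n => (g₀ ^ n) • x) ∨
        GromovEquiv (fun n => w n • y) (fun n => (g₀⁻¹ ^ n) • x) := by
  have : IsIsometricSMul G X := ⟨hiso⟩
  intro x
  obtain ⟨B, hB⟩ := hg₀.exists_orbitTaut hhyp x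
  refine ⟨hB.gromovSeq hg₀, hB.inv.gromovSeq hg₀.inv, hB.not_gromovEquiv, fun y w hw => ?_⟩
  obtain ⟨B', hB'⟩ := hg₀.exists_orbitTaut hhyp y
  exact hB.gromovEquiv_or_gromovEquiv hhyp hg₀ hB' hw fun n =>
    hlineal g₀ _ hg₀ (hg₀.conj (w n)) (w n • y)

/-- Let X be a hyperbolic geodesic metric space and G a group acting by isometries
on X. If G contains a loxodromic element and any two loxodromic elements of G share both fixed
points in ∂X (G is lineal), then the limit set of G in ∂X consists of exactly these two common
fixed points. (Boundary points are represented by Gromov sequences.) -/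
theorem stmt10 {G X : Type*} [Group G] [MulAction G X] [MetricSpace X]
    (δ : ℝ) (hδ : 0 ≤ δ) (hgeo : IsGeodesicSpace X) (hhyp : IsGromovHyperbolic X δ)
    (hiso : ∀ g : G, Isometry (fun x : X => g • x))
    (g₀ : G) (hg₀ : Loxodromic (X := X) g₀)
    (hlineal : ∀ g h : G, Loxodromic (X := X) g → Loxodromic (X := X) h → ∀ x : X,
      (GromovEquiv (fun n => (g ^ n) • x) (fun n => (h ^ n) • x) ∧
        GromovEquiv (fun n => (g⁻¹ ^ n) • x) (fun n => (h⁻¹ ^ n) • x)) ∨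
      (GromovEquiv (fun n => (g ^ n) • x) (fun n => (h⁻¹ ^ n) • x) ∧
        GromovEquiv (fun n => (g⁻¹ ^ n) • x) (fun n => (h ^ n) • x))) :
    ∀ x : X,
      GromovSeq (fun n => (g₀ ^ n) • x) ∧
      GromovSeq (fun n => (g₀⁻¹ ^ n) • x) ∧
      ¬ GromovEquiv (fun n => (g₀ ^ n) • x) (fun n => (g₀⁻¹ ^ n) • x) ∧
      ∀ (y : X) (w : ℕ → G), GromovSeq (fun n => w n • y) →
        GromovEquiv (fun n => w n • y) (fun n => (g₀ ^ n) • x) ∨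
        GromovEquiv (fun n => w n • y) (fun n => (g₀⁻¹ ^ n) • x) :=
  stmt10_general δ hhyp hiso g₀ hg₀ hlineal
end

section
/- Let T be an ℝ-tree and let g, h be isometries of T such that g is elliptic (fixes a point) and h is hyperbolic with axis A_h. If the fixed point set of g intersects A_h, then ‖gh‖_T ≤ ‖h‖_T. -/
theorem transLen_le_dist {T : Type*} [MetricSpace T] (φ : T ≃ᵢ T) (x : T) :
    transLen φ ≤ dist x (φ x) :=
  ciInf_le ⟨0, by rintro _ ⟨y, rfl⟩; exact dist_nonneg⟩ x

theorem dist_trans_apply_of_isFixedPt {T : Type*} [MetricSpace T] {g : T ≃ᵢ T} {x : T}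
    (hx : Function.IsFixedPt g x) (h : T ≃ᵢ T) : dist x (h.trans g x) = dist x (h x) := by
  simpa only [IsometryEquiv.trans_apply, hx.eq] using g.dist_eq x (h x)

theorem stmt17_general {T : Type*} [MetricSpace T]
    (g h : T ≃ᵢ T)
    (hmeet : ({x : T | g x = x} ∩ axisSet h).Nonempty) :
    transLen (h.trans g) ≤ transLen h := by
  obtain ⟨x, hgx, hax⟩ := hmeet
  calc transLen (h.trans g) ≤ dist x (h.trans g x) := transLen_le_dist _ x
    _ = dist x (h x) := dist_trans_apply_of_isFixedPt hgx h
    _ = transLen h := hax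

/-- Let T be an ℝ-tree and let g, h be isometries of T such that g is elliptic
(fixes a point) and h is hyperbolic with axis A_h. If the fixed point set of g intersects A_h,
then ‖gh‖_T ≤ ‖h‖_T. -/
theorem stmt17 {T : Type*} [MetricSpace T] [Nonempty T] (htree : IsRTree T)
    (g h : T ≃ᵢ T) (hg : ∃ x : T, g x = x) (hh : IsHyperbolicIsom h)
    (hmeet : ({x : T | g x = x} ∩ axisSet h).Nonempty) :
    transLen (h.trans g) ≤ transLen h :=
  stmt17_general g h hmeet
end
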